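/- arXiv:2602.05968 — 3 statements merged into one kernel-verified Lean document; each statement's English description precedes it below -/
import Mathlib

section
/- Bounds on the sharp C_p-constant (Proposition 2.10): For every p ≥ 2, the constant c₁(p) satisfies 1/2^{p−2} ≤ c₁(p) ≤ (p−1)/2^{p−2}. -/
/-!
Write `ρ = √(s² + t²)`, so that `|s| ≤ ρ`. The lower bound is the pointwise inequality
`ρ^p ≤ 2^(p-2) ((ρ² + 2s + 1)^(p/2) - 1 - ps)`. For `ρ ≤ 2`, Bernoulli's inequality bounds the
bracket below by `(p/2) ρ²`, and `ρ^(p-2) ≤ 2^(p-2)`. For `ρ ≥ 2`, convexity of `x ↦ x^(p/2)` at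
`(ρ - 1)²`, the least value of `ρ² + 2s + 1`, reduces it to the one-variable inequality
`ρ^p ≤ 2^(p-2) ((ρ - 1)^p + pρ - 1)`. This holds at `ρ = 2`, and the difference
is increasing by the power-mean inequality `ρ^(p-1) ≤ 2^(p-2) ((ρ - 1)^(p-1) + 1)`.
The upper bound is the value `2p / 2^p` of the quotient at `(s, t) = (-2, 0)`.
-/

open Real Set

namespace Real

lemma rpow_add_le_mul_rpow_add_rpow {a b r : ℝ} (ha : 0 ≤ a) (hb : 0 ≤ b) (hr : 1 ≤ r) :
    (a + b) ^ r ≤ 2 ^ (r - 1) * (a ^ r + b ^ r) := by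
  lift a to NNReal using ha
  lift b to NNReal using hb
  exact_mod_cast NNReal.rpow_add_le_mul_rpow_add_rpow a b hr

lemma rpow_add_mul_sub_le_rpow {a b q : ℝ} (hb : 1 ≤ b) (hba : b ≤ a) (hq : 1 ≤ q) :
    b ^ q + q * (a - b) ≤ a ^ q := by
  have hderiv (x : ℝ) : HasDerivAt (fun x : ℝ => x ^ q - q * x) (q * x ^ (q - 1) - q) x :=
    (((hasDerivAt_id' x).rpow_const (Or.inr hq)).sub
      ((hasDerivAt_id' x).const_mul q)).congr_deriv (by ring)
  have hmono : MonotoneOn (fun x : ℝ => x ^ q - q * x) (Ici 1) := by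
    refine monotoneOn_of_hasDerivWithinAt_nonneg (convex_Ici 1)
      (fun x _ => (hderiv x).continuousAt.continuousWithinAt)
      (fun x _ => (hderiv x).hasDerivWithinAt) fun x hx => ?_
    rw [interior_Ici] at hx
    have : 1 ≤ x ^ (q - 1) := one_le_rpow (le_of_lt hx) (by linarith)
    nlinarith
  linarith [hmono hb (hb.trans hba) hba]

lemma sq_rpow_div_two {x : ℝ} (hx : 0 ≤ x) (p : ℝ) : (x ^ 2) ^ (p / 2) = x ^ p := by
  rw [← rpow_natCast_mul hx]
  congr 1
  push_cast
  ring

lemma two_rpow_eq_two_rpow_sub_two_mul_four (p : ℝ) : (2 : ℝ) ^ p = 2 ^ (p - 2) * 4 := by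
  rw [show (4 : ℝ) = 2 ^ (2 : ℝ) by norm_num, ← rpow_add two_pos, sub_add_cancel]

end Real

lemma rpow_le_two_rpow_mul_sub_one_rpow_add {p x : ℝ} (hp : 2 ≤ p) (hx : 2 ≤ x) :
    x ^ p ≤ 2 ^ (p - 2) * ((x - 1) ^ p + p * x - 1) := by
  have hp1 : 1 ≤ p := by linarith
  set g : ℝ → ℝ := fun x => 2 ^ (p - 2) * ((x - 1) ^ p + p * x - 1) - x ^ p
  have hderiv (x : ℝ) :
      HasDerivAt g (2 ^ (p - 2) * (p * (x - 1) ^ (p - 1) + p) - p * x ^ (p - 1)) x := by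
    have h := (((((hasDerivAt_id' x).sub_const 1).rpow_const (Or.inr hp1)).add
      ((hasDerivAt_id' x).const_mul p)).sub_const 1).const_mul (2 ^ (p - 2) : ℝ)
    exact (h.sub ((hasDerivAt_id' x).rpow_const (Or.inr hp1))).congr_deriv (by ring)
  have hmono : MonotoneOn g (Ici 2) := by
    refine monotoneOn_of_hasDerivWithinAt_nonneg (convex_Ici 2)
      (fun x _ => (hderiv x).continuousAt.continuousWithinAt)
      (fun x _ => (hderiv x).hasDerivWithinAt) fun x hx => ?_
    rw [interior_Ici] at hx
    have hmean := rpow_add_le_mul_rpow_add_rpow (a := x - 1) (b := 1)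
      (by linarith [mem_Ioi.1 hx]) zero_le_one (by linarith : 1 ≤ p - 1)
    rw [sub_add_cancel, one_rpow, show p - 1 - 1 = p - 2 by ring] at hmean
    nlinarith
  have hg2 : 0 ≤ g 2 := by
    simp only [g, show (2 : ℝ) - 1 = 1 by norm_num, one_rpow,
      two_rpow_eq_two_rpow_sub_two_mul_four p]
    nlinarith [rpow_pos_of_pos two_pos (p - 2)]
  linarith [hmono self_mem_Ici hx hx]

lemma rpow_le_two_rpow_mul_of_abs_le {p ρ s : ℝ} (hp : 2 ≤ p) (hs : |s| ≤ ρ) :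
    ρ ^ p ≤ 2 ^ (p - 2) * ((ρ ^ 2 + 2 * s + 1) ^ (p / 2) - 1 - p * s) := by
  have hρ : 0 ≤ ρ := (abs_nonneg s).trans hs
  have hsρ : -ρ ≤ s := (abs_le.1 hs).1
  have hq : 1 ≤ p / 2 := by linarith
  rcases le_total ρ 2 with hρ2 | hρ2
  · have hbernoulli := one_add_mul_self_le_rpow_one_add (s := ρ ^ 2 + 2 * s)
      (by nlinarith [sq_nonneg (ρ - 1)]) hq
    have hsmall : ρ ^ (p - 2) ≤ 2 ^ (p - 2) := rpow_le_rpow hρ hρ2 (by linarith)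
    calc ρ ^ p = ρ ^ (p - 2) * ρ ^ 2 := by
          rw [← rpow_natCast, ← rpow_add' hρ (by norm_num; linarith)]
          norm_num
      _ ≤ 2 ^ (p - 2) * ρ ^ 2 := by gcongr
      _ ≤ 2 ^ (p - 2) * (p / 2 * ρ ^ 2) := by
          gcongr
          exact le_mul_of_one_le_left (sq_nonneg ρ) hq
      _ ≤ 2 ^ (p - 2) * ((ρ ^ 2 + 2 * s + 1) ^ (p / 2) - 1 - p * s) := by
          refine mul_le_mul_of_nonneg_left ?_ (by positivity)
          rw [add_comm _ (1 : ℝ)]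
          linear_combination hbernoulli
  · have htangent := rpow_add_mul_sub_le_rpow (a := ρ ^ 2 + 2 * s + 1) (b := (ρ - 1) ^ 2)
      (by nlinarith) (by nlinarith) hq
    rw [sq_rpow_div_two (by linarith) p] at htangent
    calc ρ ^ p ≤ 2 ^ (p - 2) * ((ρ - 1) ^ p + p * ρ - 1) :=
          rpow_le_two_rpow_mul_sub_one_rpow_add hp hρ2
      _ ≤ 2 ^ (p - 2) * ((ρ ^ 2 + 2 * s + 1) ^ (p / 2) - 1 - p * s) := by
          refine mul_le_mul_of_nonneg_left ?_ (by positivity)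
          linear_combination htangent

/-- The sharp constant `c₁(p)` in the lower bound for the `C_p` functional:
the infimum over `(s,t) ≠ (0,0)` of `[(t²+s²+2s+1)^{p/2} - 1 - ps] / (t²+s²)^{p/2}`. -/
noncomputable def c1 (p : ℝ) : ℝ :=
  sInf { r : ℝ | ∃ s t : ℝ, ¬(s = 0 ∧ t = 0) ∧
    r = ((t ^ 2 + s ^ 2 + 2 * s + 1) ^ (p / 2) - 1 - p * s) / (t ^ 2 + s ^ 2) ^ (p / 2) }

lemma one_div_two_rpow_sub_two_le_div_of_ne_zero {p s t : ℝ} (hp : 2 ≤ p)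
    (hst : ¬(s = 0 ∧ t = 0)) :
    1 / (2 : ℝ) ^ (p - 2) ≤
      ((t ^ 2 + s ^ 2 + 2 * s + 1) ^ (p / 2) - 1 - p * s) / (t ^ 2 + s ^ 2) ^ (p / 2) := by
  set ρ := √(t ^ 2 + s ^ 2)
  have hρsq : ρ ^ 2 = t ^ 2 + s ^ 2 := sq_sqrt (by positivity)
  have hρ : 0 < ρ := sqrt_pos.2 <| by
    by_contra! h
    exact hst ⟨by nlinarith [sq_nonneg s, sq_nonneg t], by nlinarith [sq_nonneg s, sq_nonneg t]⟩
  have hs : |s| ≤ ρ := abs_le_of_sq_le_sq (by nlinarith [sq_nonneg t]) hρ.le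
  rw [← hρsq, sq_rpow_div_two hρ.le, div_le_div_iff₀ (by positivity) (by positivity), one_mul]
  simpa [mul_comm] using rpow_le_two_rpow_mul_of_abs_le hp hs

/-- Bounds on the sharp `C_p`-constant: for every `p ≥ 2`,
`1/2^{p-2} ≤ c₁(p) ≤ (p-1)/2^{p-2}`. -/
theorem c1_bounds (p : ℝ) (hp : 2 ≤ p) :
    1 / (2 : ℝ) ^ (p - 2) ≤ c1 p ∧ c1 p ≤ (p - 1) / (2 : ℝ) ^ (p - 2) := by
  have hlower : 1 / (2 : ℝ) ^ (p - 2) ∈ lowerBounds { r : ℝ | ∃ s t : ℝ, ¬(s = 0 ∧ t = 0) ∧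
      r = ((t ^ 2 + s ^ 2 + 2 * s + 1) ^ (p / 2) - 1 - p * s) / (t ^ 2 + s ^ 2) ^ (p / 2) } := by
    rintro r ⟨s, t, hst, rfl⟩
    exact one_div_two_rpow_sub_two_le_div_of_ne_zero hp hst
  refine ⟨le_csInf ⟨_, -2, 0, by norm_num, rfl⟩ hlower, ?_⟩
  calc c1 p ≤ 2 * p / 2 ^ p := by
        refine csInf_le ⟨_, hlower⟩ ⟨-2, 0, by norm_num, ?_⟩
        rw [show (0 : ℝ) ^ 2 + (-2) ^ 2 = 2 ^ 2 by norm_num, sq_rpow_div_two zero_le_two]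
        norm_num
        ring
    _ ≤ (p - 1) / 2 ^ (p - 2) := by
        rw [two_rpow_eq_two_rpow_sub_two_mul_four, div_le_div_iff₀ (by positivity) (by positivity)]
        nlinarith [rpow_pos_of_pos two_pos (p - 2)]
end

section
/- Asymptotics of the sharp C_p-constant (Proposition 2.10, second assertion): c₁(p) → 0 as p → ∞. -/
open Filter Real

lemma one_add_mul_le_rpow_sq_add_sq_add_two_mul_add_one {p : ℝ} (hp : 1 ≤ p) (s t : ℝ) :
    1 + p * s ≤ (t ^ 2 + s ^ 2 + 2 * s + 1) ^ (p / 2) := by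
  rcases le_or_gt (-1) s with hs | hs
  · calc 1 + p * s ≤ (1 + s) ^ p := one_add_mul_self_le_rpow_one_add hs hp
      _ = ((1 + s) ^ 2) ^ (p / 2) := by
          rw [← rpow_natCast, ← rpow_mul (by linarith)]
          ring_nf
      _ ≤ (t ^ 2 + s ^ 2 + 2 * s + 1) ^ (p / 2) :=
          rpow_le_rpow (by positivity) (by nlinarith [sq_nonneg t]) (by linarith)
  · have hneg : 1 + p * s ≤ 0 := by nlinarith
    exact hneg.trans (rpow_nonneg (by nlinarith [sq_nonneg t, sq_nonneg (1 + s)]) _)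

lemma c1_quotient_nonneg {p : ℝ} (hp : 1 ≤ p) (s t : ℝ) :
    0 ≤ ((t ^ 2 + s ^ 2 + 2 * s + 1) ^ (p / 2) - 1 - p * s) / (t ^ 2 + s ^ 2) ^ (p / 2) := by
  have hnum := one_add_mul_le_rpow_sq_add_sq_add_two_mul_add_one hp s t
  exact div_nonneg (by linarith) (rpow_nonneg (by positivity) _)

lemma c1_nonneg {p : ℝ} (hp : 1 ≤ p) : 0 ≤ c1 p := by
  refine le_csInf ⟨_, -2, 0, by norm_num, rfl⟩ ?_
  rintro _ ⟨s, t, -, rfl⟩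
  exact c1_quotient_nonneg hp s t

lemma c1_le_quotient {p : ℝ} (hp : 1 ≤ p) {s t : ℝ} (hst : ¬(s = 0 ∧ t = 0)) :
    c1 p ≤ ((t ^ 2 + s ^ 2 + 2 * s + 1) ^ (p / 2) - 1 - p * s) / (t ^ 2 + s ^ 2) ^ (p / 2) := by
  refine csInf_le ⟨0, ?_⟩ ⟨s, t, hst, rfl⟩
  rintro _ ⟨s, t, -, rfl⟩
  exact c1_quotient_nonneg hp s t

lemma c1_le_two_mul_div_two_rpow {p : ℝ} (hp : 1 ≤ p) : c1 p ≤ 2 * p / 2 ^ p := by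
  have hfour : (4 : ℝ) ^ (p / 2) = 2 ^ p := by
    rw [show (4 : ℝ) = 2 ^ (2 : ℝ) by norm_num, ← rpow_mul (by norm_num)]
    ring_nf
  convert c1_le_quotient hp (s := -2) (t := 0) (by norm_num) using 1
  norm_num [hfour]
  ring

lemma tendsto_mul_div_two_rpow_atTop (c : ℝ) :
    Tendsto (fun p : ℝ => c * p / 2 ^ p) atTop (nhds 0) := by
  have h := (tendsto_rpow_mul_exp_neg_mul_atTop_nhds_zero 1 (log 2)
    (log_pos one_lt_two)).const_mul c
  rw [mul_zero] at h
  refine h.congr fun p => ?_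
  rw [rpow_one, neg_mul, exp_neg, ← rpow_def_of_pos two_pos]
  ring

/-- Asymptotics of the sharp `C_p`-constant: `c₁(p) → 0` as `p → ∞`. -/
theorem c1_tendsto_zero : Filter.Tendsto c1 Filter.atTop (nhds 0) :=
  squeeze_zero' (eventually_atTop.mpr ⟨1, fun _ hp => c1_nonneg hp⟩)
    (eventually_atTop.mpr ⟨1, fun _ hp => c1_le_two_mul_div_two_rpow hp⟩)
    (tendsto_mul_div_two_rpow_atTop 2)
end

section
/- Convexity bound for the root (step in the proof of Proposition 2.10): Let p ≥ 2 and let r₀ ≥ 1 satisfy r₀^{p−1} = (p−1)r₀ + (p−2), equivalently r₀^{p−1} + 1 = (p−1)(r₀+1). Then (r₀+1)^{p−2} ≤ 2^{p−2}(p−1); consequently (p−1)(r₀+1)^{2−p} ≥ 2^{2−p}. -/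
/-- Convexity bound for the root: if `p ≥ 2` and `r₀ ≥ 1` satisfies
`r₀^{p-1} = (p-1)r₀ + (p-2)` (equivalently `r₀^{p-1} + 1 = (p-1)(r₀+1)`), then
`(r₀+1)^{p-2} ≤ 2^{p-2}(p-1)`; consequently `(p-1)(r₀+1)^{2-p} ≥ 2^{2-p}`. -/
theorem convexity_bound_root (p : ℝ) (hp : 2 ≤ p) (r₀ : ℝ) (hr₀ : 1 ≤ r₀)
    (heq : r₀ ^ (p - 1) = (p - 1) * r₀ + (p - 2)) :
    (r₀ + 1) ^ (p - 2) ≤ 2 ^ (p - 2) * (p - 1)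
      ∧ (p - 1) * (r₀ + 1) ^ (2 - p) ≥ (2 : ℝ) ^ (2 - p) := by
  have hr0 : (0:ℝ) < r₀ + 1 := by linarith
  have hp1 : (1:ℝ) ≤ p - 1 := by linarith
  have hcv := (convexOn_rpow hp1).2 (show r₀ ∈ Set.Ici (0:ℝ) by
      simp; linarith) (show (1:ℝ) ∈ Set.Ici (0:ℝ) by simp)
    (show (0:ℝ) ≤ 1/2 by norm_num) (show (0:ℝ) ≤ 1/2 by norm_num)
    (show (1/2 : ℝ) + 1/2 = 1 by norm_num)
  simp only [smul_eq_mul, Real.one_rpow, mul_one] at hcv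
  have hmid : ((r₀ + 1)/2) ^ (p-1) ≤ (p - 1) * (r₀ + 1) / 2 := by
    calc ((r₀ + 1)/2) ^ (p-1) = (1/2 * r₀ + 1/2) ^ (p-1) := by ring_nf
    _ ≤ 1/2 * r₀ ^ (p-1) + 1/2 := hcv
    _ = (p - 1) * (r₀ + 1) / 2 := by rw [heq]; ring
  have hdiv : ((r₀ + 1)/2) ^ (p-1) = (r₀+1)^(p-1) / 2^(p-1) :=
    Real.div_rpow (show (0:ℝ) ≤ r₀ + 1 by linarith) (show (0:ℝ) ≤ 2 by norm_num) _
  have h2 : (0:ℝ) < (2:ℝ) ^ (p-1) := Real.rpow_pos_of_pos (by norm_num) _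
  have key : (r₀+1)^(p-1) ≤ 2^(p-2) * (p-1) * (r₀+1) := by
    rw [hdiv, div_le_iff₀ h2] at hmid
    calc (r₀+1)^(p-1) ≤ (p - 1) * (r₀ + 1) / 2 * 2 ^ (p-1) := hmid
    _ = (p-1) * (r₀+1) * (2 ^ (p-1) / 2) := by ring
    _ = 2^(p-2) * (p-1) * (r₀+1) := by
        have h2eq : (2:ℝ)^(p-1) = 2^(p-2)*2 := by
          rw [show p-1 = p-2+1 by ring, Real.rpow_add_one two_ne_zero]
        rw [h2eq]; ring
  have h1 : (r₀ + 1) ^ (p - 2) ≤ 2 ^ (p - 2) * (p - 1) := by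
    have : (r₀+1)^(p-1) = (r₀+1)^(p-2) * (r₀+1) := by
      rw [show p - 1 = p - 2 + 1 by ring, Real.rpow_add hr0, Real.rpow_one]
    rw [this] at key
    exact le_of_mul_le_mul_right key hr0
  refine ⟨h1, ?_⟩
  have hr2 : (0:ℝ) < (r₀+1) ^ (p-2) := Real.rpow_pos_of_pos hr0 _
  have h22 : (0:ℝ) < (2:ℝ) ^ (p-2) := Real.rpow_pos_of_pos (by norm_num) _
  have e1 : (r₀+1) ^ (2-p) = ((r₀+1) ^ (p-2))⁻¹ := by
    rw [show 2 - p = -(p-2) by ring, Real.rpow_neg hr0.le]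
  have e2 : (2:ℝ) ^ (2-p) = ((2:ℝ) ^ (p-2))⁻¹ := by
    rw [show 2 - p = -(p-2) by ring, Real.rpow_neg (by norm_num)]
  rw [ge_iff_le, e1, e2, ← div_eq_mul_inv, ← one_div, div_le_div_iff₀ h22 hr2,
    one_mul]
  linarith [h1]
end
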